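/- Let S be a numerical semigroup with multiplicity e, let k ≥ 2, and let x_1 ≠ x_2 be elements of D_k with maximal representations x_1 + e = Σ α_i n_i and x_2 + e = Σ β_i n_i having the same support. Then there exist indices i, j with α_i > β_i and α_j < β_j. -/

import Mathlib

open Set

/-- A numerical semigroup: a cofinite submonoid of ℕ. -/
def IsNumSgp (S : Set ℕ) : Prop :=
  0 ∈ S ∧ (∀ a ∈ S, ∀ b ∈ S, a + b ∈ S) ∧ Sᶜ.Finite

/-- The maximal ideal `M = S \ {0}`. -/
def MS (S : Set ℕ) : Set ℕ := S \ {0}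

/-- The multiplicity `e` of `S`, the smallest nonzero element. -/
noncomputable def mult (S : Set ℕ) : ℕ := sInf (MS S)

/-- `nM S h` is the set of sums of `h` elements of `M = S \ {0}` (with `nM S 0 = {0}`). -/
def nM (S : Set ℕ) : ℕ → Set ℕ
  | 0 => {0}
  | k + 1 => {x | ∃ a ∈ MS S, ∃ b ∈ nM S k, x = a + b}

/-- The order of `s`: the largest `h` with `s ∈ hM`. -/
noncomputable def ordS (S : Set ℕ) (s : ℕ) : ℕ := sSup {h | s ∈ nM S h}

/-- The Apéry set of `S` with respect to the multiplicity `e`: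
elements `s ∈ S` with `s - e ∉ S`. -/
def Ap (S : Set ℕ) : Set ℕ := {s ∈ S | ∀ t ∈ S, t + mult S ≠ s}

/-- Elements of the Apéry set of order `k`. -/
def ApK (S : Set ℕ) (k : ℕ) : Set ℕ := {s ∈ Ap S | ordS S s = k}

/-- `C_k = {s ∈ S : ord s = k and s - e ∉ (k-1)M}`. -/
def CK (S : Set ℕ) (k : ℕ) : Set ℕ :=
  {s ∈ S | ordS S s = k ∧ ∀ t ∈ nM S (k - 1), t + mult S ≠ s}

/-- `D_k = {s ∈ S : ord s = k-1 and ord (s+e) > k}`. -/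
def DK (S : Set ℕ) (k : ℕ) : Set ℕ :=
  {s ∈ S | ordS S s = k - 1 ∧ k < ordS S (s + mult S)}

/-- The Hilbert function of `R = k[[S]]`: `H(0) = 1`, `H(n) = |nM \ (n+1)M|`. -/
noncomputable def HF (S : Set ℕ) (n : ℕ) : ℕ := (nM S n \ nM S (n + 1)).ncard

/-- The set of minimal generators of `S`. -/
def MinGens (S : Set ℕ) : Set ℕ :=
  MS S \ {x | ∃ a ∈ MS S, ∃ b ∈ MS S, x = a + b}

/-- `a` is a maximal representation of `s`: a finitely supported coefficient
function on the minimal generators with `Σ aⱼ nⱼ = s` and `Σ aⱼ = ord s`. -/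
def IsMaxRep (S : Set ℕ) (s : ℕ) (a : ℕ →₀ ℕ) : Prop :=
  (↑a.support : Set ℕ) ⊆ MinGens S ∧
  (a.sum fun n c => c * n) = s ∧
  (a.sum fun _ c => c) = ordS S s

/-- `|Supp(s)|`: the maximal number of distinct minimal generators appearing
in a maximal representation of `s`. -/
noncomputable def SuppCard (S : Set ℕ) (s : ℕ) : ℕ :=
  sSup {q | ∃ a : ℕ →₀ ℕ, IsMaxRep S s a ∧ a.support.card = q}

/-- The Frobenius number of `S`. -/
noncomputable def Frob (S : Set ℕ) : ℕ := sSup Sᶜ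

/-!
If `α ≤ β` coefficientwise, then `x₂ + e = (x₁ + e) + Σ (βᵢ - αᵢ) nᵢ`, so `x₂` is `x₁` plus an
element of `hM` with `h = Σ (βᵢ - αᵢ)`. Since `x₁ ≠ x₂` we get `h ≥ 1`, hence
`ord x₂ ≥ ord x₁ + h > ord x₁`, contradicting `ord x₁ = ord x₂ = k - 1`.
-/

section nM

variable {S : Set ℕ}

lemma le_of_mem_nM {h x : ℕ} (hx : x ∈ nM S h) : h ≤ x := by
  induction h generalizing x with
  | zero => exact Nat.zero_le x
  | succ h ih =>
    obtain ⟨u, hu, v, hv, rfl⟩ := hx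
    have := ih hv
    have := Nat.one_le_iff_ne_zero.mpr hu.2
    omega

lemma bddAbove_setOf_mem_nM (x : ℕ) : BddAbove {h | x ∈ nM S h} :=
  ⟨x, fun _ hh => le_of_mem_nM hh⟩

lemma add_mem_nM {h h' x y : ℕ} (hx : x ∈ nM S h) (hy : y ∈ nM S h') :
    x + y ∈ nM S (h + h') := by
  induction h generalizing x with
  | zero =>
    obtain rfl : x = 0 := hx
    simpa using hy
  | succ h ih =>
    obtain ⟨u, hu, v, hv, rfl⟩ := hx
    rw [Nat.succ_add, add_assoc]
    exact ⟨u, hu, v + y, ih hv, rfl⟩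

lemma mul_mem_nM {n : ℕ} (hn : n ∈ MS S) (m : ℕ) : m * n ∈ nM S m := by
  induction m with
  | zero => simp [nM]
  | succ m ih => exact ⟨n, hn, m * n, ih, by ring⟩

lemma sum_mem_nM {ι : Type*} (s : Finset ι) (f g : ι → ℕ) (hf : ∀ i ∈ s, f i ∈ nM S (g i)) :
    ∑ i ∈ s, f i ∈ nM S (∑ i ∈ s, g i) := by
  classical
  induction s using Finset.induction_on with
  | empty => simp [nM]
  | insert i s hi ih =>
    rw [Finset.sum_insert hi, Finset.sum_insert hi]
    exact add_mem_nM (hf i (Finset.mem_insert_self i s))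
      (ih fun j hj => hf j (Finset.mem_insert_of_mem hj))

lemma finsupp_sum_mem_nM (c : ℕ →₀ ℕ) (hc : ↑c.support ⊆ MS S) :
    (c.sum fun n m => m * n) ∈ nM S (c.sum fun _ m => m) :=
  sum_mem_nM _ _ _ fun n hn => mul_mem_nM (hc hn) (c n)

lemma le_ordS_of_mem_nM {h x : ℕ} (hx : x ∈ nM S h) : h ≤ ordS S x :=
  le_csSup (bddAbove_setOf_mem_nM x) hx

lemma mem_nM_ordS {x : ℕ} (hx : x ∈ S) : x ∈ nM S (ordS S x) := by
  refine Nat.sSup_mem ?_ (bddAbove_setOf_mem_nM x)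
  rcases eq_or_ne x 0 with rfl | hx0
  · exact ⟨0, rfl⟩
  · exact ⟨1, x, ⟨hx, hx0⟩, 0, rfl, rfl⟩

lemma ordS_add_le_ordS_add {h x y : ℕ} (hx : x ∈ S) (hy : y ∈ nM S h) :
    ordS S x + h ≤ ordS S (x + y) :=
  le_ordS_of_mem_nM (add_mem_nM (mem_nM_ordS hx) hy)

end nM

lemma exists_lt_of_isMaxRep_of_ordS_le {S : Set ℕ} {x₁ x₂ : ℕ} (hx₁ : x₁ ∈ S)
    (hord : ordS S x₂ ≤ ordS S x₁) (hne : x₁ ≠ x₂) {a b : ℕ →₀ ℕ}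
    (ha : IsMaxRep S (x₁ + mult S) a) (hb : IsMaxRep S (x₂ + mult S) b) :
    ∃ i, b i < a i := by
  by_contra! hab
  set c := b - a
  have hbc : b = a + c := (add_tsub_cancel_of_le (Finsupp.le_def.mpr hab)).symm
  have hx₂ : x₂ = x₁ + c.sum fun n m => m * n := by
    have hsum := hb.2.1
    rw [hbc, Finsupp.sum_add_index' (by simp) (fun _ _ _ => add_mul _ _ _), ha.2.1] at hsum
    omega
  have hc : ↑c.support ⊆ MS S := fun n hn =>
    (hb.1 (Finsupp.support_mono tsub_le_self hn)).1
  have hmem := finsupp_sum_mem_nM c hc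
  rcases Nat.eq_zero_or_pos (c.sum fun _ m => m) with h0 | hpos
  · rw [h0] at hmem
    exact hne (by rw [hx₂, show (c.sum fun n m => m * n) = 0 from hmem, add_zero])
  · have := ordS_add_le_ordS_add hx₁ hmem
    rw [← hx₂] at this
    omega

theorem stmt8_general (S : Set ℕ) (k : ℕ)
    (x₁ x₂ : ℕ) (h1 : x₁ ∈ DK S k) (h2 : x₂ ∈ DK S k) (hne : x₁ ≠ x₂)
    (a b : ℕ →₀ ℕ) (ha : IsMaxRep S (x₁ + mult S) a)
    (hb : IsMaxRep S (x₂ + mult S) b) :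
    (∃ i, b i < a i) ∧ (∃ j, a j < b j) := by
  have hord : ordS S x₁ = ordS S x₂ := h1.2.1.trans h2.2.1.symm
  exact ⟨exists_lt_of_isMaxRep_of_ordS_le h1.1 hord.ge hne ha hb,
    exists_lt_of_isMaxRep_of_ordS_le h2.1 hord.le hne.symm hb ha⟩

theorem stmt8 (S : Set ℕ) (hS : IsNumSgp S) (k : ℕ) (hk : 2 ≤ k)
    (x₁ x₂ : ℕ) (h1 : x₁ ∈ DK S k) (h2 : x₂ ∈ DK S k) (hne : x₁ ≠ x₂)
    (a b : ℕ →₀ ℕ) (ha : IsMaxRep S (x₁ + mult S) a)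
    (hb : IsMaxRep S (x₂ + mult S) b) (hsupp : a.support = b.support) :
    (∃ i, b i < a i) ∧ (∃ j, a j < b j) :=
  stmt8_general S k x₁ x₂ h1 h2 hne a b ha hb
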